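/- arXiv:2502.19369 — 6 statements merged into one kernel-verified Lean document; each statement's English description precedes it below -/
import Mathlib

section
/- If M is a minimal Morse set of a multivector field V on a finite simplicial complex K, then for any pair of simplices σ, τ ∈ M there exists a path from σ to τ within K. -/
/-- Convex subset (multivector) of a simplicial complex with face relation `≤`. -/
def IsMultivector {K : Type*} [Fintype K] [PartialOrder K] (V : Set K) : Prop :=
  ∀ ⦃σ τ μ : K⦄, σ ∈ V → τ ∈ V → σ ≤ μ → μ ≤ τ → μ ∈ V

/-- A multivector field on a finite simplicial complex `K`:
a partition of `K` into convex sets (multivectors), where `part σ` is the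
partition element `[σ]_𝒱` containing `σ`. -/
structure MVF (K : Type*) [Fintype K] [PartialOrder K] where
  part : K → Set K
  mem_part : ∀ σ, σ ∈ part σ
  part_eq : ∀ σ τ, τ ∈ part σ → part τ = part σ
  convex : ∀ σ, IsMultivector (part σ)

/-- The induced multivalued map: `τ ∈ F_𝒱(σ) = [σ]_𝒱 ∪ cl(σ)`. -/
def MVF.step {K : Type*} [Fintype K] [PartialOrder K] (𝒱 : MVF K) (σ τ : K) : Prop :=
  τ ∈ 𝒱.part σ ∨ τ ≤ σ

/-- `M` is a Morse set: every path (with respect to `F_𝒱`) starting and ending in `M`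
lies entirely in `M`. -/
def MVF.IsMorse {K : Type*} [Fintype K] [PartialOrder K] (𝒱 : MVF K) (M : Set K) : Prop :=
  ∀ a b x : K, a ∈ M → b ∈ M →
    Relation.ReflTransGen 𝒱.step a x → Relation.ReflTransGen 𝒱.step x b → x ∈ M

/-- `M` is a minimal Morse set: a Morse set which is not the disjoint union of
two nonempty Morse sets. -/
def MVF.IsMinimalMorse {K : Type*} [Fintype K] [PartialOrder K] (𝒱 : MVF K) (M : Set K) : Prop :=
  𝒱.IsMorse M ∧
    ¬ ∃ M₁ M₂ : Set K, 𝒱.IsMorse M₁ ∧ 𝒱.IsMorse M₂ ∧ M₁.Nonempty ∧ M₂.Nonempty ∧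
      Disjoint M₁ M₂ ∧ M₁ ∪ M₂ = M

/-- For any pair of simplices `σ, τ` in a minimal Morse set `M`, there is a path
from `σ` to `τ` in `K`. -/
theorem stmt_3 {K : Type*} [Fintype K] [PartialOrder K] (𝒱 : MVF K) (M : Set K)
    (hmin : 𝒱.IsMinimalMorse M) (σ τ : K) (hσ : σ ∈ M) (hτ : τ ∈ M) :
    Relation.ReflTransGen 𝒱.step σ τ := by
  by_contra hcon
  obtain ⟨hM, hnot⟩ := hmin
  apply hnot
  refine ⟨{x | x ∈ M ∧ Relation.ReflTransGen 𝒱.step σ x},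
          {x | x ∈ M ∧ ¬ Relation.ReflTransGen 𝒱.step σ x}, ?_, ?_, ?_, ?_, ?_, ?_⟩
  · rintro a b x ⟨haM, haR⟩ ⟨hbM, -⟩ hax hxb
    exact ⟨hM a b x haM hbM hax hxb, haR.trans hax⟩
  · rintro a b x ⟨haM, -⟩ ⟨hbM, hbR⟩ hax hxb
    exact ⟨hM a b x haM hbM hax hxb, fun h => hbR (h.trans hxb)⟩
  · exact ⟨σ, hσ, Relation.ReflTransGen.refl⟩
  · exact ⟨τ, hτ, hcon⟩
  · rw [Set.disjoint_left]; rintro x ⟨-, h⟩ ⟨-, h'⟩; exact h' h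
  · ext x
    simp only [Set.mem_union, Set.mem_setOf_eq]
    constructor
    · rintro (⟨h, -⟩ | ⟨h, -⟩) <;> exact h
    · intro h; by_cases hr : Relation.ReflTransGen 𝒱.step σ x
      · exact Or.inl ⟨h, hr⟩
      · exact Or.inr ⟨h, hr⟩
end

section
/- Any two Conley complexes of a finitely generated P-filtered chain complex are filtered chain isomorphic. -/
variable (P : Type*) [PartialOrder P] [Fintype P] [DecidableEq P]

/-- A finite-dimensional `P`-filtered chain complex over `ℤ/2`: graded pieces
`C_{m,p} = (Fin (dim m p) → ZMod 2)`, boundary components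
`d m p q : C_{m+1,q} → C_{m,p}` which are filtered (`d_{pq} ≠ 0 → p ≤ q`)
and square to zero. -/
structure FCC where
  dim : ℤ → P → ℕ
  d : ∀ (m : ℤ) (p q : P), (Fin (dim (m + 1) q) → ZMod 2) →ₗ[ZMod 2] (Fin (dim m p) → ZMod 2)
  filtered : ∀ m p q, d m p q ≠ 0 → p ≤ q
  dsq : ∀ m p q, (∑ r : P, (d m p r).comp (d (m + 1) r q)) = 0

variable {P}

/-- Degreewise families of linear maps between (the graded pieces of) two filtered
chain complexes, identified with matrices of partial maps. -/
def Maps (C C' : FCC P) :=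
  ∀ (m : ℤ) (p q : P), (Fin (C.dim m q) → ZMod 2) →ₗ[ZMod 2] (Fin (C'.dim m p) → ZMod 2)

/-- `f` is a `P`-filtered chain map: filtered and commuting with the boundaries. -/
def IsFilteredChainMap (C C' : FCC P) (f : Maps C C') : Prop :=
  (∀ m p q, f m p q ≠ 0 → p ≤ q) ∧
  ∀ m p q, (∑ r : P, (C'.d m p r).comp (f (m + 1) r q)) = ∑ r : P, (f m p r).comp (C.d m r q)

/-- Composition of map families (matrix product of partial maps). -/
def compMaps {C C' C'' : FCC P} (g : Maps C' C'') (f : Maps C C') : Maps C C'' :=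
  fun m p q => ∑ r : P, (g m p r).comp (f m r q)

/-- The identity map family on a filtered chain complex. -/
def idMaps (C : FCC P) : Maps C C :=
  fun m p q => if h : p = q then (by subst h; exact LinearMap.id) else 0

/-- Two map families `f, g : C → C'` are filtered chain homotopic: there is a
filtered degree `+1` map family `S` with `g - f = d' S + S d`. -/
def FilteredHomotopic (C C' : FCC P) (f g : Maps C C') : Prop :=
  ∃ S : ∀ (m : ℤ) (p q : P),
      (Fin (C.dim m q) → ZMod 2) →ₗ[ZMod 2] (Fin (C'.dim (m + 1) p) → ZMod 2),
    (∀ m p q, S m p q ≠ 0 → p ≤ q) ∧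
    ∀ m p q, g (m + 1) p q - f (m + 1) p q =
      (∑ r : P, (C'.d (m + 1) p r).comp (S (m + 1) r q)) +
        ∑ r : P, (S m p r).comp (C.d m r q)

/-- Two filtered chain complexes are filtered chain homotopic: there are filtered
chain maps in both directions whose compositions are filtered chain homotopic
to the identities. -/
def FilteredHomotopicComplexes (C C' : FCC P) : Prop :=
  ∃ (f : Maps C C') (g : Maps C' C),
    IsFilteredChainMap C C' f ∧ IsFilteredChainMap C' C g ∧
    FilteredHomotopic C C (compMaps g f) (idMaps C) ∧
    FilteredHomotopic C' C' (compMaps f g) (idMaps C')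

/-- Filtered chain isomorphism: filtered chain maps in both directions composing
to the identities. -/
def FilteredChainIso (C C' : FCC P) : Prop :=
  ∃ (f : Maps C C') (g : Maps C' C),
    IsFilteredChainMap C C' f ∧ IsFilteredChainMap C' C g ∧
    compMaps g f = idMaps C ∧ compMaps f g = idMaps C'

/-- `Cb` is a Conley complex of `C`: filtered chain homotopic to `C` with
vanishing diagonal boundary components `d̄_{pp} = 0`. -/
def IsConleyComplex (C Cb : FCC P) : Prop :=
  FilteredHomotopicComplexes C Cb ∧ ∀ m p, Cb.d m p p = 0

/-!
Two Conley complexes of `C` are filtered homotopy equivalent to each other, say via `F` and `G`.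
Since their differentials vanish on the diagonal, so does `d S + S d` for every filtered homotopy
`S`; hence `G ∘ F` and `F ∘ G` have identity diagonal blocks. A filtered map with identity
diagonal differs from the identity by a strictly filtered, hence nilpotent, map, so it has a
filtered inverse given by a geometric series. Thus `F` has filtered left and right inverses, which
coincide, and the inverse of a chain map is again a chain map.
-/

open Finset

section Blocks

variable {R : Type*} [Ring R] {ι : Type*} {U V W X : ι → Type*}
  [∀ i, AddCommGroup (U i)] [∀ i, Module R (U i)] [∀ i, AddCommGroup (V i)] [∀ i, Module R (V i)]
  [∀ i, AddCommGroup (W i)] [∀ i, Module R (W i)] [∀ i, AddCommGroup (X i)] [∀ i, Module R (X i)]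

def blockId [DecidableEq ι] : ∀ p q, V q →ₗ[R] V p :=
  fun p q => if h : p = q then (by subst h; exact LinearMap.id) else 0

@[simp]
lemma blockId_self [DecidableEq ι] (p : ι) : blockId (R := R) (V := V) p p = LinearMap.id := by
  simp [blockId]

lemma blockId_of_ne [DecidableEq ι] {p q : ι} (h : p ≠ q) : blockId (R := R) (V := V) p q = 0 :=
  dif_neg h

variable [Fintype ι]

def blockMul (a : ∀ p q, W q →ₗ[R] X p) (b : ∀ p q, V q →ₗ[R] W p) : ∀ p q, V q →ₗ[R] X p :=
  fun p q => ∑ r, (a p r).comp (b r q)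

def blockToLin : (∀ p q, V q →ₗ[R] W p) →+ ((∀ q, V q) →ₗ[R] ∀ p, W p) where
  toFun a := LinearMap.pi fun p => ∑ q, (a p q).comp (LinearMap.proj q)
  map_zero' := by ext; simp
  map_add' a b := by ext; simp [sum_add_distrib]

@[simp]
lemma blockToLin_apply (a : ∀ p q, V q →ₗ[R] W p) (x : ∀ q, V q) (p : ι) :
    blockToLin a x p = ∑ q, a p q (x q) := by
  simp [blockToLin]

lemma blockToLin_injective : Function.Injective (blockToLin (R := R) (V := V) (W := W)) := by
  classical
  have entry (a : ∀ p q, V q →ₗ[R] W p) (p q : ι) (v : V q) :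
      blockToLin a (Pi.single q v) p = a p q v := by
    rw [blockToLin_apply, sum_eq_single q (fun r _ hr => by rw [Pi.single_eq_of_ne hr, map_zero])
      (by simp)]
    simp
  exact fun a b h => funext₂ fun p q => LinearMap.ext fun v => by rw [← entry, ← entry, h]

lemma blockToLin_blockMul (a : ∀ p q, W q →ₗ[R] X p) (b : ∀ p q, V q →ₗ[R] W p) :
    blockToLin (blockMul a b) = (blockToLin a).comp (blockToLin b) := by
  refine LinearMap.ext fun x => funext fun p => ?_
  simp only [blockToLin_apply, blockMul, LinearMap.sum_apply, LinearMap.comp_apply, map_sum]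
  exact sum_comm

lemma blockMul_assoc (a : ∀ p q, X q →ₗ[R] U p) (b : ∀ p q, W q →ₗ[R] X p)
    (c : ∀ p q, V q →ₗ[R] W p) : blockMul (blockMul a b) c = blockMul a (blockMul b c) :=
  blockToLin_injective <| by simp only [blockToLin_blockMul, LinearMap.comp_assoc]

lemma blockMul_add (a : ∀ p q, W q →ₗ[R] X p) (b c : ∀ p q, V q →ₗ[R] W p) :
    blockMul a (b + c) = blockMul a b + blockMul a c :=
  blockToLin_injective <| by simp only [blockToLin_blockMul, map_add, LinearMap.comp_add]

lemma add_blockMul (a b : ∀ p q, W q →ₗ[R] X p) (c : ∀ p q, V q →ₗ[R] W p) :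
    blockMul (a + b) c = blockMul a c + blockMul b c :=
  blockToLin_injective <| by simp only [blockToLin_blockMul, map_add, LinearMap.add_comp]

lemma blockMul_sub (a : ∀ p q, W q →ₗ[R] X p) (b c : ∀ p q, V q →ₗ[R] W p) :
    blockMul a (b - c) = blockMul a b - blockMul a c :=
  blockToLin_injective <| by simp only [blockToLin_blockMul, map_sub, LinearMap.comp_sub]

lemma sub_blockMul (a b : ∀ p q, W q →ₗ[R] X p) (c : ∀ p q, V q →ₗ[R] W p) :
    blockMul (a - b) c = blockMul a c - blockMul b c :=
  blockToLin_injective <| by simp only [blockToLin_blockMul, map_sub, LinearMap.sub_comp]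

variable [DecidableEq ι]

lemma blockToLin_blockId : blockToLin (blockId (R := R) (V := V)) = LinearMap.id := by
  refine LinearMap.ext fun x => funext fun p => ?_
  rw [blockToLin_apply, sum_eq_single p (fun q _ hq => by rw [blockId_of_ne (Ne.symm hq)]; rfl)
    (by simp)]
  simp

@[simp]
lemma blockId_blockMul (a : ∀ p q, V q →ₗ[R] W p) : blockMul blockId a = a :=
  blockToLin_injective <| by rw [blockToLin_blockMul, blockToLin_blockId, LinearMap.id_comp]

@[simp]
lemma blockMul_blockId (a : ∀ p q, V q →ₗ[R] W p) : blockMul a blockId = a :=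
  blockToLin_injective <| by rw [blockToLin_blockMul, blockToLin_blockId, LinearMap.comp_id]

def blockPow (n : ∀ p q, V q →ₗ[R] V p) : ℕ → ∀ p q, V q →ₗ[R] V p
  | 0 => blockId
  | k + 1 => blockMul n (blockPow n k)

lemma blockToLin_blockPow (n : ∀ p q, V q →ₗ[R] V p) (k : ℕ) :
    blockToLin (blockPow n k) = blockToLin n ^ k := by
  induction k with
  | zero => exact blockToLin_blockId
  | succ k ih => rw [blockPow, blockToLin_blockMul, ih, pow_succ']; rfl

end Blocks

section Filtered

variable {R : Type*} [Ring R] {ι : Type*} [PartialOrder ι] {V W X : ι → Type*}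
  [∀ i, AddCommGroup (V i)] [∀ i, Module R (V i)] [∀ i, AddCommGroup (W i)] [∀ i, Module R (W i)]
  [∀ i, AddCommGroup (X i)] [∀ i, Module R (X i)]

def IsFiltered (a : ∀ p q, V q →ₗ[R] W p) : Prop :=
  ∀ p q, a p q ≠ 0 → p ≤ q

lemma isFiltered_blockId [DecidableEq ι] : IsFiltered (blockId (R := R) (V := V)) := by
  intro p q h
  by_contra hpq
  exact h (blockId_of_ne (ne_of_not_le hpq))

lemma IsFiltered.add {a b : ∀ p q, V q →ₗ[R] W p} (ha : IsFiltered a) (hb : IsFiltered b) :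
    IsFiltered (a + b) := by
  intro p q h
  by_cases hap : a p q = 0
  · exact hb p q fun hbp => h (by simp [hap, hbp])
  · exact ha p q hap

lemma IsFiltered.sum {κ : Type*} {s : Finset κ} {a : κ → ∀ p q, V q →ₗ[R] W p}
    (ha : ∀ i ∈ s, IsFiltered (a i)) : IsFiltered (∑ i ∈ s, a i) := by
  intro p q h
  rw [Finset.sum_apply, Finset.sum_apply] at h
  obtain ⟨i, hi, hne⟩ := exists_ne_zero_of_sum_ne_zero h
  exact ha i hi p q hne

variable [Fintype ι]

lemma IsFiltered.blockMul {a : ∀ p q, W q →ₗ[R] X p} {b : ∀ p q, V q →ₗ[R] W p}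
    (ha : IsFiltered a) (hb : IsFiltered b) : IsFiltered (blockMul a b) := by
  intro p q h
  obtain ⟨r, -, hr⟩ := exists_ne_zero_of_sum_ne_zero h
  exact (ha p r fun h0 => hr (by rw [h0, LinearMap.zero_comp])).trans
    (hb r q fun h0 => hr (by rw [h0, LinearMap.comp_zero]))

lemma blockMul_self_of_isFiltered {a : ∀ p q, W q →ₗ[R] X p} {b : ∀ p q, V q →ₗ[R] W p}
    (ha : IsFiltered a) (hb : IsFiltered b) (p : ι) :
    blockMul a b p p = (a p p).comp (b p p) := by
  refine sum_eq_single p (fun r _ hrp => ?_) (by simp)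
  by_cases hap : a p r = 0
  · rw [hap, LinearMap.zero_comp]
  by_cases hbp : b r p = 0
  · rw [hbp, LinearMap.comp_zero]
  exact absurd (le_antisymm (hb r p hbp) (ha p r hap)) hrp

variable [DecidableEq ι]

lemma IsFiltered.blockPow {n : ∀ p q, V q →ₗ[R] V p} (hn : IsFiltered n) :
    ∀ k, IsFiltered (blockPow n k)
  | 0 => isFiltered_blockId
  | k + 1 => hn.blockMul (hn.blockPow k)

open scoped Classical in
lemma card_Iic_add_le_of_blockPow_ne_zero {n : ∀ p q, V q →ₗ[R] V p}
    (hn : ∀ p q, n p q ≠ 0 → p < q) :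
    ∀ k p q, blockPow n k p q ≠ 0 → #{r | r ≤ p} + k ≤ #{r | r ≤ q}
  | 0, p, q, h => by
    obtain rfl : p = q := by_contra fun hpq => h (blockId_of_ne hpq)
    simp
  | k + 1, p, q, h => by
    obtain ⟨r, -, hr⟩ := exists_ne_zero_of_sum_ne_zero h
    have hpr : p < r := hn p r fun h0 => hr (by rw [h0, LinearMap.zero_comp])
    have hrq := card_Iic_add_le_of_blockPow_ne_zero hn k r q
      fun h0 => hr (by rw [h0, LinearMap.comp_zero])
    have hlt : #{s | s ≤ p} < #{s | s ≤ r} := by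
      refine card_lt_card
        ((ssubset_iff_of_subset fun s hs => ?_).2 ⟨r, by simp, by simpa using hpr.not_ge⟩)
      simp only [mem_filter, mem_univ, true_and] at hs ⊢
      exact hs.trans hpr.le
    omega

lemma blockPow_card_eq_zero {n : ∀ p q, V q →ₗ[R] V p} (hn : ∀ p q, n p q ≠ 0 → p < q) :
    blockPow n (Fintype.card ι) = 0 := by
  classical
  funext p q
  by_contra h
  have hle := card_Iic_add_le_of_blockPow_ne_zero hn _ p q h
  have hq : #{r | r ≤ q} ≤ Fintype.card ι := card_filter_le _ _
  have hp : 0 < #{r | r ≤ p} := card_pos.2 ⟨p, by simp⟩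
  omega

lemma exists_isFiltered_inverse {u : ∀ p q, V q →ₗ[R] V p} (hu : IsFiltered u)
    (hdiag : ∀ p, u p p = LinearMap.id) :
    ∃ w, IsFiltered w ∧ blockMul w u = blockId ∧ blockMul u w = blockId := by
  set n := blockId - u
  have hn : ∀ p q, n p q ≠ 0 → p < q := by
    intro p q h
    rcases eq_or_ne p q with rfl | hpq
    · simp [n, hdiag] at h
    · refine lt_of_le_of_ne (hu p q fun h0 => h ?_) hpq
      simp [n, h0, blockId_of_ne hpq]
  have hnil : blockToLin n ^ Fintype.card ι = 0 := by
    rw [← blockToLin_blockPow, blockPow_card_eq_zero hn, map_zero]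
  have hu_eq : blockToLin u = 1 - blockToLin n := by
    rw [show u = blockId - n from (sub_sub_cancel _ _).symm, map_sub, blockToLin_blockId]
    rfl
  refine ⟨∑ i ∈ range (Fintype.card ι), blockPow n i,
    IsFiltered.sum fun i _ => (IsFiltered.blockPow (fun p q h => (hn p q h).le) i), ?_, ?_⟩
  all_goals
    apply blockToLin_injective
    rw [blockToLin_blockMul, blockToLin_blockId, map_sum]
    simp only [blockToLin_blockPow, hu_eq]
  · exact (geom_sum_mul_neg _ _).trans (by rw [hnil, sub_zero]; rfl)
  · exact (mul_neg_geom_sum _ _).trans (by rw [hnil, sub_zero]; rfl)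

end Filtered

section

omit [DecidableEq P]

lemma compMaps_eq_blockMul {C C' C'' : FCC P} (g : Maps C' C'') (f : Maps C C') (m : ℤ) :
    compMaps g f m = blockMul (g m) (f m) := rfl

lemma compMaps_assoc {C C' C'' C''' : FCC P} (h : Maps C'' C''') (g : Maps C' C'')
    (f : Maps C C') : compMaps (compMaps h g) f = compMaps h (compMaps g f) :=
  funext fun m => blockMul_assoc (h m) (g m) (f m)

lemma isFilteredChainMap_iff {C C' : FCC P} {f : Maps C C'} :
    IsFilteredChainMap C C' f ↔
      (∀ m, IsFiltered (f m)) ∧ ∀ m, blockMul (C'.d m) (f (m + 1)) = blockMul (f m) (C.d m) := by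
  simp only [IsFilteredChainMap, funext_iff]
  rfl

lemma filteredHomotopic_iff {C C' : FCC P} {f g : Maps C C'} :
    FilteredHomotopic C C' f g ↔
      ∃ S : ∀ (m : ℤ) (p q : P),
          (Fin (C.dim m q) → ZMod 2) →ₗ[ZMod 2] (Fin (C'.dim (m + 1) p) → ZMod 2),
        (∀ m, IsFiltered (S m)) ∧
        ∀ m, g (m + 1) - f (m + 1) =
          blockMul (C'.d (m + 1)) (S (m + 1)) + blockMul (S m) (C.d m) := by
  simp only [FilteredHomotopic, funext_iff]
  rfl

lemma IsFilteredChainMap.comp {C C' C'' : FCC P} {g : Maps C' C''} {f : Maps C C'}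
    (hg : IsFilteredChainMap C' C'' g) (hf : IsFilteredChainMap C C' f) :
    IsFilteredChainMap C C'' (compMaps g f) := by
  rw [isFilteredChainMap_iff] at hg hf ⊢
  refine ⟨fun m => (hg.1 m).blockMul (hf.1 m), fun m => ?_⟩
  rw [compMaps_eq_blockMul, compMaps_eq_blockMul, ← blockMul_assoc, hg.2,
    blockMul_assoc, hf.2, blockMul_assoc]

lemma FilteredHomotopic.trans {C C' : FCC P} {f g h : Maps C C'}
    (hfg : FilteredHomotopic C C' f g) (hgh : FilteredHomotopic C C' g h) :
    FilteredHomotopic C C' f h := by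
  obtain ⟨S, hSf, hS⟩ := filteredHomotopic_iff.1 hfg
  obtain ⟨T, hTf, hT⟩ := filteredHomotopic_iff.1 hgh
  refine filteredHomotopic_iff.2 ⟨S + T, fun m => (hSf m).add (hTf m), fun m => ?_⟩
  rw [← sub_add_sub_cancel (h (m + 1)) (g (m + 1)) (f (m + 1)), hS, hT, Pi.add_apply,
    Pi.add_apply, blockMul_add, add_blockMul]
  abel

lemma FilteredHomotopic.comp_left {C C' C'' : FCC P} {f g : Maps C C'} {α : Maps C' C''}
    (h : FilteredHomotopic C C' f g) (hα : IsFilteredChainMap C' C'' α) :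
    FilteredHomotopic C C'' (compMaps α f) (compMaps α g) := by
  obtain ⟨S, hSf, hS⟩ := filteredHomotopic_iff.1 h
  rw [isFilteredChainMap_iff] at hα
  refine filteredHomotopic_iff.2
    ⟨fun m => blockMul (α (m + 1)) (S m), fun m => (hα.1 (m + 1)).blockMul (hSf m), fun m => ?_⟩
  rw [compMaps_eq_blockMul, compMaps_eq_blockMul, ← blockMul_sub, hS, blockMul_add,
    ← blockMul_assoc, ← hα.2 (m + 1)]
  simp only [blockMul_assoc]

lemma FilteredHomotopic.comp_right {C C' C'' : FCC P} {f g : Maps C C'} {β : Maps C'' C}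
    (h : FilteredHomotopic C C' f g) (hβ : IsFilteredChainMap C'' C β) :
    FilteredHomotopic C'' C' (compMaps f β) (compMaps g β) := by
  obtain ⟨S, hSf, hS⟩ := filteredHomotopic_iff.1 h
  rw [isFilteredChainMap_iff] at hβ
  refine filteredHomotopic_iff.2
    ⟨fun m => blockMul (S m) (β m), fun m => (hSf m).blockMul (hβ.1 m), fun m => ?_⟩
  rw [compMaps_eq_blockMul, compMaps_eq_blockMul, ← sub_blockMul, hS, add_blockMul,
    blockMul_assoc (S m), hβ.2 m]
  simp only [blockMul_assoc]

/-- The diagonal entries of `d S + S d` are `d_pp S_pp + S_pp d_pp = 0`. -/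
lemma FilteredHomotopic.apply_self_eq {C C' : FCC P} {f g : Maps C C'}
    (h : FilteredHomotopic C C' f g) (hC : ∀ m p, C.d m p p = 0) (hC' : ∀ m p, C'.d m p p = 0)
    (m : ℤ) (p : P) : f m p p = g m p p := by
  obtain ⟨S, hSf, hS⟩ := filteredHomotopic_iff.1 h
  obtain ⟨k, rfl⟩ : ∃ k, m = k + 1 := ⟨m - 1, by ring⟩
  have hdiag := congrFun₂ (hS k) p p
  rw [Pi.sub_apply, Pi.sub_apply, Pi.add_apply, Pi.add_apply,
    blockMul_self_of_isFiltered (C'.filtered (k + 1)) (hSf (k + 1)),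
    blockMul_self_of_isFiltered (hSf k) (C.filtered k), hC', hC, LinearMap.zero_comp,
    LinearMap.comp_zero, add_zero, sub_eq_zero] at hdiag
  exact hdiag.symm

end

@[simp]
lemma idMaps_self (C : FCC P) (m : ℤ) (p : P) : idMaps C m p p = LinearMap.id := by
  simp [idMaps]

@[simp]
lemma idMaps_compMaps {C C' : FCC P} (f : Maps C C') : compMaps (idMaps C') f = f :=
  funext fun m => blockId_blockMul (f m)

@[simp]
lemma compMaps_idMaps {C C' : FCC P} (f : Maps C C') : compMaps f (idMaps C) = f :=
  funext fun m => blockMul_blockId (f m)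

lemma IsFilteredChainMap.of_inverse {C C' : FCC P} {f : Maps C C'} {g : Maps C' C}
    (hf : IsFilteredChainMap C C' f) (hg : ∀ m, IsFiltered (g m))
    (hgf : compMaps g f = idMaps C) (hfg : compMaps f g = idMaps C') :
    IsFilteredChainMap C' C g := by
  rw [isFilteredChainMap_iff] at hf ⊢
  refine ⟨hg, fun m => ?_⟩
  have hgf_m : blockMul (g m) (f m) = blockId := congrFun hgf m
  have hfg_m : blockMul (f (m + 1)) (g (m + 1)) = blockId := congrFun hfg (m + 1)
  calc blockMul (C.d m) (g (m + 1))
      = blockMul (blockMul (g m) (f m)) (blockMul (C.d m) (g (m + 1))) := by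
        rw [hgf_m, blockId_blockMul]
    _ = blockMul (g m) (blockMul (blockMul (f m) (C.d m)) (g (m + 1))) := by
        simp only [blockMul_assoc]
    _ = blockMul (g m) (blockMul (blockMul (C'.d m) (f (m + 1))) (g (m + 1))) := by
        rw [hf.2]
    _ = blockMul (g m) (C'.d m) := by rw [blockMul_assoc, hfg_m, blockMul_blockId]

lemma exists_inverse_of_filteredHomotopic_idMaps {C : FCC P} {u : Maps C C}
    (h : FilteredHomotopic C C u (idMaps C)) (hC : ∀ m p, C.d m p p = 0)
    (hu : ∀ m, IsFiltered (u m)) :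
    ∃ w : Maps C C,
      (∀ m, IsFiltered (w m)) ∧ compMaps w u = idMaps C ∧ compMaps u w = idMaps C := by
  choose w hw using fun m => exists_isFiltered_inverse (hu m) fun p =>
    (h.apply_self_eq hC hC m p).trans (idMaps_self C m p)
  exact ⟨w, fun m => (hw m).1, funext fun m => (hw m).2.1, funext fun m => (hw m).2.2⟩

lemma FilteredHomotopic.comp_comp_idMaps {C C' C'' : FCC P} {f : Maps C C'} {g : Maps C' C}
    {f' : Maps C' C''} {g' : Maps C'' C'} (hf : IsFilteredChainMap C C' f)
    (hg : IsFilteredChainMap C' C g) (hgf : FilteredHomotopic C C (compMaps g f) (idMaps C))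
    (hgf' : FilteredHomotopic C' C' (compMaps g' f') (idMaps C')) :
    FilteredHomotopic C C (compMaps (compMaps g g') (compMaps f' f)) (idMaps C) := by
  have h := (hgf'.comp_left hg).comp_right hf
  rw [compMaps_idMaps] at h
  simpa only [compMaps_assoc] using h.trans hgf

lemma FilteredHomotopicComplexes.symm {C C' : FCC P} (h : FilteredHomotopicComplexes C C') :
    FilteredHomotopicComplexes C' C :=
  let ⟨f, g, hf, hg, hgf, hfg⟩ := h
  ⟨g, f, hg, hf, hfg, hgf⟩

lemma FilteredHomotopicComplexes.trans {C C' C'' : FCC P} (h : FilteredHomotopicComplexes C C')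
    (h' : FilteredHomotopicComplexes C' C'') : FilteredHomotopicComplexes C C'' :=
  let ⟨f, g, hf, hg, hgf, hfg⟩ := h
  let ⟨f', g', hf', hg', hgf', hfg'⟩ := h'
  ⟨compMaps f' f, compMaps g g', hf'.comp hf, hg.comp hg',
    FilteredHomotopic.comp_comp_idMaps hf hg hgf hgf',
    FilteredHomotopic.comp_comp_idMaps hg' hf' hfg' hfg⟩

theorem FilteredHomotopicComplexes.filteredChainIso {C C' : FCC P}
    (h : FilteredHomotopicComplexes C C') (hC : ∀ m p, C.d m p p = 0)
    (hC' : ∀ m p, C'.d m p p = 0) : FilteredChainIso C C' := by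
  obtain ⟨f, g, hf, hg, hgf, hfg⟩ := h
  obtain ⟨w, hw, hwgf, -⟩ := exists_inverse_of_filteredHomotopic_idMaps hgf hC (hg.comp hf).1
  obtain ⟨w', -, -, hfgw'⟩ := exists_inverse_of_filteredHomotopic_idMaps hfg hC' (hf.comp hg).1
  have hleft : compMaps (compMaps w g) f = idMaps C := by rw [compMaps_assoc, hwgf]
  have hright : compMaps f (compMaps g w') = idMaps C' := by rw [← compMaps_assoc, hfgw']
  have hleft_eq_right : compMaps w g = compMaps g w' := by
    calc compMaps w g = compMaps (compMaps (compMaps w g) f) (compMaps g w') := by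
          rw [compMaps_assoc (compMaps w g), hright, compMaps_idMaps]
      _ = compMaps g w' := by rw [hleft, idMaps_compMaps]
  rw [← hleft_eq_right] at hright
  exact ⟨f, compMaps w g, hf, hf.of_inverse (fun m => (hw m).blockMul (hg.1 m)) hleft hright,
    hleft, hright⟩

theorem stmt_8_general (C C1 C2 : FCC P)
    (h1 : IsConleyComplex C C1) (h2 : IsConleyComplex C C2) :
    FilteredChainIso C1 C2 :=
  (h1.1.symm.trans h2.1).filteredChainIso h1.2 h2.2

/-- Any two Conley complexes of a finitely generated `P`-filtered chain complex
are filtered chain isomorphic. -/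
theorem stmt_8 (C C1 C2 : FCC P)
    (hfin : {m : ℤ | ∃ p, C.dim m p ≠ 0}.Finite)
    (h1 : IsConleyComplex C C1) (h2 : IsConleyComplex C C2) :
    FilteredChainIso C1 C2 :=
  stmt_8_general C C1 C2 h1 h2
end

section
/- During the left-to-right column reduction of an upper triangular matrix over Z/2, where each column addition adds an earlier column with equal pivot, a non-homogeneous column never becomes homogeneous. -/
namespace CM

variable {n : ℕ} {P : Type*} [DecidableEq P]

/-- `i` is the pivot row (lowest `1`) of column `j` in `A`. -/
def IsLow (A : Matrix (Fin n) (Fin n) (ZMod 2)) (j i : Fin n) : Prop :=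
  A i j ≠ 0 ∧ ∀ k, A k j ≠ 0 → k ≤ i

instance (A : Matrix (Fin n) (Fin n) (ZMod 2)) (j i : Fin n) : Decidable (IsLow A j i) := by
  unfold IsLow; infer_instance

/-- Column `j` is homogeneous: its pivot row lies in the same Morse set
(as measured by `morse`) as `j`. -/
def Homog (A : Matrix (Fin n) (Fin n) (ZMod 2)) (morse : Fin n → P) (j : Fin n) : Prop :=
  ∃ i, IsLow A j i ∧ morse i = morse j

instance (A : Matrix (Fin n) (Fin n) (ZMod 2)) (morse : Fin n → P) (j : Fin n) :
    Decidable (Homog A morse j) := by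
  unfold Homog; infer_instance

/-- Row/column `i` is targetable: it is the pivot row of some homogeneous column. -/
def Targetable (A : Matrix (Fin n) (Fin n) (ZMod 2)) (morse : Fin n → P) (i : Fin n) : Prop :=
  ∃ j, Homog A morse j ∧ IsLow A j i

/-- Add column `s` to column `j` (over `ℤ/2`). -/
def addCol (A : Matrix (Fin n) (Fin n) (ZMod 2)) (s j : Fin n) :
    Matrix (Fin n) (Fin n) (ZMod 2) :=
  fun i k => if k = j then A i j + A i s else A i k

/-- Homogeneous columns `s < j` with pivot `i`, candidates for addition to column `j`. -/
def candidates (A : Matrix (Fin n) (Fin n) (ZMod 2)) (morse : Fin n → P) (j i : Fin n) :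
    Finset (Fin n) :=
  Finset.univ.filter fun s => s < j ∧ Homog A morse s ∧ IsLow A s i

/-- One inner step of ConMat: if `A[i,j] = 1` and some homogeneous column `s < j`
has pivot `i`, add such a column (the leftmost one) to column `j`. -/
def stepIJ (morse : Fin n → P) (A : Matrix (Fin n) (Fin n) (ZMod 2)) (j i : Fin n) :
    Matrix (Fin n) (Fin n) (ZMod 2) :=
  if h : A i j ≠ 0 ∧ (candidates A morse j i).Nonempty then
    addCol A ((candidates A morse j i).min' h.2) j
  else A

/-- Exhaustively reduce column `j`, scanning rows from the bottom up. -/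
def reduceCol (morse : Fin n → P) (A : Matrix (Fin n) (Fin n) (ZMod 2)) (j : Fin n) :
    Matrix (Fin n) (Fin n) (ZMod 2) :=
  ((List.finRange n).reverse).foldl (fun B i => stepIJ morse B j i) A

/-- The ConMat algorithm: homogeneity-restricted exhaustive left-to-right column
reduction. -/
def conMat (morse : Fin n → P) (A : Matrix (Fin n) (Fin n) (ZMod 2)) :
    Matrix (Fin n) (Fin n) (ZMod 2) :=
  (List.finRange n).foldl (fun B j => reduceCol morse B j) A

/-- All columns `s < j` with pivot `i` (no homogeneity restriction). -/
def candidatesC (A : Matrix (Fin n) (Fin n) (ZMod 2)) (j i : Fin n) : Finset (Fin n) :=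
  Finset.univ.filter fun s => s < j ∧ IsLow A s i

/-- One inner step of the complete (unrestricted) reduction. -/
def stepIJC (A : Matrix (Fin n) (Fin n) (ZMod 2)) (j i : Fin n) :
    Matrix (Fin n) (Fin n) (ZMod 2) :=
  if h : A i j ≠ 0 ∧ (candidatesC A j i).Nonempty then
    addCol A ((candidatesC A j i).min' h.2) j
  else A

/-- Complete (unrestricted) left-to-right column reduction; afterwards every
nonzero column has a pivot distinct from those of all other columns. -/
def completeReduce (A : Matrix (Fin n) (Fin n) (ZMod 2)) :
    Matrix (Fin n) (Fin n) (ZMod 2) :=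
  (List.finRange n).foldl
    (fun B j => ((List.finRange n).reverse).foldl (fun C i => stepIJC C j i) B) A

end CM

namespace CM

/-- One left-to-right reduction step: some column `s < j` whose pivot is a row `i`
with `A[i,j] = 1` is added to column `j`. -/
def RedStep {n : ℕ} (A A' : Matrix (Fin n) (Fin n) (ZMod 2)) : Prop :=
  ∃ s j i : Fin n, s < j ∧ IsLow A s i ∧ A i j ≠ 0 ∧ A' = addCol A s j

/-- Invariant: strict upper triangularity, and every nonzero entry of column `c`
sits in a row with strictly smaller Morse value. -/
def Inv {n m : ℕ} (morse : Fin n → Fin m) (c : Fin n)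
    (B : Matrix (Fin n) (Fin n) (ZMod 2)) : Prop :=
  (∀ i j, B i j ≠ 0 → i < j) ∧ (∀ i, B i c ≠ 0 → morse i < morse c)

lemma zmod2_add_ne {x y : ZMod 2} (h : x + y ≠ 0) : x ≠ 0 ∨ y ≠ 0 := by
  by_contra hcon
  push_neg at hcon
  exact h (by rw [hcon.1, hcon.2, add_zero])

lemma inv_step {n m : ℕ} {morse : Fin n → Fin m} (hmono : Monotone morse) {c : Fin n}
    {A A' : Matrix (Fin n) (Fin n) (ZMod 2)} (hI : Inv morse c A) (h : RedStep A A') :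
    Inv morse c A' := by
  obtain ⟨s, j, i, hsj, hlow, hij, rfl⟩ := h
  obtain ⟨hup, hc⟩ := hI
  constructor
  · intro a b hab
    simp only [addCol] at hab
    by_cases hb : b = j
    · subst hb
      simp only [if_pos rfl] at hab
      rcases zmod2_add_ne hab with h1 | h1
      · exact hup a b h1
      · exact lt_trans (hup a s h1) hsj
    · rw [if_neg hb] at hab
      exact hup a b hab
  · intro a ha
    simp only [addCol] at ha
    by_cases hcj : c = j
    · subst hcj
      simp only [if_pos rfl] at ha
      rcases zmod2_add_ne ha with h1 | h1
      · exact hc a h1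
      · have hai : a ≤ i := hlow.2 a h1
        exact lt_of_le_of_lt (hmono hai) (hc i hij)
    · rw [if_neg (by exact fun h => hcj h)] at ha
      exact hc a ha

lemma inv_not_homog {n m : ℕ} {morse : Fin n → Fin m} {c : Fin n}
    {B : Matrix (Fin n) (Fin n) (ZMod 2)} (hI : Inv morse c B) :
    ¬ Homog B morse c := by
  rintro ⟨i, hlow, heq⟩
  exact absurd heq (ne_of_lt (hI.2 i hlow.1))

/-- During a left-to-right column reduction of a strictly upper triangular `ℤ/2`
matrix whose index order is compatible with the Morse-set blocks, a
non-homogeneous column never becomes homogeneous. -/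
theorem stmt_10 {n m : ℕ} (morse : Fin n → Fin m) (hmono : Monotone morse)
    (A B : Matrix (Fin n) (Fin n) (ZMod 2))
    (hupper : ∀ i j, A i j ≠ 0 → i < j)
    (hred : Relation.ReflTransGen RedStep A B)
    (c : Fin n) (hc : ¬ Homog A morse c) :
    ¬ Homog B morse c := by
  have hInvA : Inv morse c A := by
    refine ⟨hupper, fun i hi => ?_⟩
    -- column c is nonzero; take its maximal nonzero row, the pivot
    have hS : (Finset.univ.filter fun k => A k c ≠ 0).Nonempty :=
      ⟨i, by simp [hi]⟩
    set l := (Finset.univ.filter fun k => A k c ≠ 0).max' hS with hl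
    have hlmem : A l c ≠ 0 := by
      have := (Finset.univ.filter fun k => A k c ≠ 0).max'_mem hS
      simpa using this
    have hlow : IsLow A c l := by
      refine ⟨hlmem, fun k hk => ?_⟩
      exact Finset.le_max' _ k (by simp [hk])
    have hne : morse l ≠ morse c := fun heq => hc ⟨l, hlow, heq⟩
    have hlt : morse l < morse c :=
      lt_of_le_of_ne (hmono (le_of_lt (hupper l c hlmem))) hne
    exact lt_of_le_of_lt (hmono (hlow.2 i hi)) hlt
  have hInvB : Inv morse c B := by
    induction hred with
    | refl => exact hInvA
    | tail _ hstep ih => exact inv_step hmono ih hstep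
  exact inv_not_homog hInvB

end CM
end

section
/- If, at any stage of a left-to-right column reduction, adding a column s < j to a homogeneous column j changes the pivot of column j (and the pivot of s is a row where column j has a 1), then s is itself homogeneous, lies in the same Morse set as j, and low(s) = low(j). -/
namespace CM

/-- If at some stage of a left-to-right column reduction (strictly upper
triangular matrix, Morse blocks compatible with the index order), adding a column
`s < j` with pivot row `i` satisfying `A[i,j] = 1` to a homogeneous column `j`
changes the pivot of column `j`, then `s` is itself homogeneous, lies in the same
Morse set as `j`, and `low(s) = low(j)`. -/
theorem stmt_11 {n m : ℕ} (morse : Fin n → Fin m) (hmono : Monotone morse)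
    (A : Matrix (Fin n) (Fin n) (ZMod 2))
    (hupper : ∀ i j, A i j ≠ 0 → i < j)
    (j s i : Fin n)
    (hj : Homog A morse j) (hsj : s < j)
    (hlow : IsLow A s i) (hentry : A i j ≠ 0)
    (hchange : ∀ l, IsLow A j l → ¬ IsLow (addCol A s j) j l) :
    Homog A morse s ∧ morse s = morse j ∧ (∀ l, IsLow A s l ↔ IsLow A j l) := by
  obtain ⟨p, hp, hpm⟩ := hj
  have hip : i ≤ p := hp.2 i hentry
  -- show i = p
  have hie : i = p := by
    rcases lt_or_eq_of_le hip with hlt | he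
    · exfalso
      apply hchange p hp
      constructor
      · have hac : addCol A s j p j = A p j + A p s := by simp [addCol]
        rw [hac]
        have hps : A p s = 0 := by
          by_contra h
          exact absurd (hlow.2 p h) (not_le.mpr hlt)
        rw [hps, add_zero]; exact hp.1
      · intro k hk
        have hk' : A k j + A k s ≠ 0 := by
          have hac : addCol A s j k j = A k j + A k s := by simp [addCol]
          rwa [hac] at hk
        by_cases hkj : A k j = 0
        · have hks : A k s ≠ 0 := by
            intro h; rw [hkj, h, add_zero] at hk'; exact hk' rfl
          exact (hlow.2 k hks).trans hip
        · exact hp.2 k hkj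
    · exact he
  subst hie
  have his : i < s := hupper i s hlow.1
  have hmsj : morse s = morse j := le_antisymm (hmono hsj.le)
    (hpm ▸ hmono his.le)
  have uniq : ∀ {c l l' : Fin n}, IsLow A c l → IsLow A c l' → l = l' :=
    fun h1 h2 => le_antisymm (h2.2 _ h1.1) (h1.2 _ h2.1)
  refine ⟨⟨i, hlow, hpm.trans hmsj.symm⟩, hmsj, fun l => ⟨?_, ?_⟩⟩
  · intro h; rwa [uniq h hlow]
  · intro h; rwa [uniq h hp]

end CM
end

section
/- Let A_out be the matrix produced by the homogeneous-restricted exhaustive left-to-right column reduction (ConMat), and let Ā be a complete (unrestricted) left-to-right column reduction of A_out. Then a column j is homogeneous in A_out if and only if it is homogeneous in Ā. -/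
namespace CM

/-!
Let `B` be the output of ConMat and `R` its complete reduction. The complete reduction treats
column `c` only once the columns before it are final, and adding a column with pivot `i` to
column `c` changes only rows `≤ i`. So if `q` is the pivot of column `c` in `B` and no earlier
column of `R` has pivot `q`, column `c` keeps its pivot `q` in `R`.

By induction on `c`: if column `c` of `R` has a pivot `p` in the Morse set of `c`, let `q` be the
pivot of column `c` in `B`. Then `p ≤ q < c`, and monotonicity of the Morse map puts `q` in the
Morse set of `c`. An earlier column `s` of `R` with pivot `q` satisfies `q < s < c`, so it is
homogeneous, hence by induction a homogeneous column of `B` with pivot `q`, which R3 forbids.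
Thus column `c` keeps the pivot `q = p`. Conversely a homogeneous pivot of `B` survives in `R` by
the same argument.
-/

variable {n : ℕ}

/-- Property R3 of the paper, satisfied by the output of ConMat. -/
def HomogReduced {P : Type*} [DecidableEq P] (B : Matrix (Fin n) (Fin n) (ZMod 2))
    (morse : Fin n → P) : Prop :=
  ∀ j i, B i j ≠ 0 → candidates B morse j i = ∅

section Pivots

variable {P : Type*} {A B : Matrix (Fin n) (Fin n) (ZMod 2)}

theorem IsLow.unique {j i i' : Fin n} (h : IsLow A j i) (h' : IsLow A j i') : i = i' :=
  le_antisymm (h'.2 i h.1) (h.2 i' h'.1)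

theorem exists_isLow {j : Fin n} (h : ∃ r, A r j ≠ 0) : ∃ i, IsLow A j i := by
  obtain ⟨r, hr⟩ := h
  obtain ⟨i, hi, hmax⟩ :=
    Finset.exists_max_image (Finset.univ.filter fun r => A r j ≠ 0) id ⟨r, by simpa using hr⟩
  exact ⟨i, (Finset.mem_filter.mp hi).2, fun k hk => hmax k (by simpa using hk)⟩

theorem isLow_congr {j : Fin n} (h : ∀ r, A r j = B r j) (i : Fin n) :
    IsLow A j i ↔ IsLow B j i := by
  simp only [IsLow, h]

theorem homog_congr {morse : Fin n → P} {j : Fin n} (h : ∀ r, A r j = B r j) :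
    Homog A morse j ↔ Homog B morse j :=
  exists_congr fun i => and_congr_left' (isLow_congr h i)

theorem mem_candidates [DecidableEq P] {morse : Fin n → P} {j i s : Fin n} :
    s ∈ candidates A morse j i ↔ s < j ∧ Homog A morse s ∧ IsLow A s i := by
  simp [candidates]

theorem candidates_congr [DecidableEq P] {morse : Fin n → P} {j i : Fin n}
    (h : ∀ s < j, ∀ r, A r s = B r s) : candidates A morse j i = candidates B morse j i := by
  ext s
  simp only [mem_candidates]
  exact and_congr_right fun hs => and_congr (homog_congr (h s hs)) (isLow_congr (h s hs) i)

end Pivots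

theorem foldl_apply_eq_of_forall_mem {α β : Type*}
    {f : Matrix (Fin n) (Fin n) α → β → Matrix (Fin n) (Fin n) α} {l : List β} {r c : Fin n}
    (h : ∀ x ∈ l, ∀ B, f B x r c = B r c) (B : Matrix (Fin n) (Fin n) α) :
    l.foldl f B r c = B r c :=
  List.foldlRecOn (motive := fun C => C r c = B r c) l f rfl
    (fun C hC x hx => (h x hx C).trans hC)

section ReductionSteps

variable {B B' : Matrix (Fin n) (Fin n) (ZMod 2)}

/-- The common shape of `stepIJ` and `stepIJC`. -/
def IsReductionStep (B B' : Matrix (Fin n) (Fin n) (ZMod 2)) (j i : Fin n) : Prop :=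
  B' = B ∨ ∃ s, IsLow B s i ∧ B i j ≠ 0 ∧ B' = addCol B s j

namespace IsReductionStep

variable {j i : Fin n}

theorem apply_of_ne (h : IsReductionStep B B' j i) {c : Fin n} (hc : c ≠ j) (r : Fin n) :
    B' r c = B r c := by
  rcases h with rfl | ⟨s, -, -, rfl⟩
  · rfl
  · simp [addCol, hc]

theorem apply_of_lt (h : IsReductionStep B B' j i) {r : Fin n} (hr : i < r) :
    B' r j = B r j := by
  rcases h with rfl | ⟨s, hs, -, rfl⟩
  · rfl
  · have hrs : B r s = 0 := by
      by_contra hrs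
      exact (hs.2 r hrs).not_gt hr
    simp [addCol, hrs]

theorem mem_of_ne_zero (h : IsReductionStep B B' j i) {S : Set (Fin n)} (hS : IsLowerSet S)
    (hB : ∀ r, B r j ≠ 0 → r ∈ S) {r : Fin n} (hr : B' r j ≠ 0) : r ∈ S := by
  rcases h with rfl | ⟨s, hs, hij, rfl⟩
  · exact hB r hr
  · simp only [addCol] at hr
    by_cases hrj : B r j = 0
    · rw [hrj, zero_add] at hr
      exact hS (hs.2 r hr) (hB i hij)
    · exact hB r hrj

theorem foldl_mem_of_ne_zero
    {step : Matrix (Fin n) (Fin n) (ZMod 2) → Fin n → Matrix (Fin n) (Fin n) (ZMod 2)}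
    (hstep : ∀ B i, IsReductionStep B (step B i) j i) (l : List (Fin n)) {S : Set (Fin n)}
    (hS : IsLowerSet S) (hB : ∀ r, B r j ≠ 0 → r ∈ S) {r : Fin n}
    (hr : l.foldl step B r j ≠ 0) : r ∈ S :=
  List.foldlRecOn (motive := fun C => ∀ r, C r j ≠ 0 → r ∈ S) l step hB
    (fun C hC i _ _ => (hstep C i).mem_of_ne_zero hS hC) r hr

end IsReductionStep

theorem isReductionStep_stepIJ {P : Type*} [DecidableEq P] (morse : Fin n → P)
    (B : Matrix (Fin n) (Fin n) (ZMod 2)) (j i : Fin n) :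
    IsReductionStep B (stepIJ morse B j i) j i := by
  unfold stepIJ
  split_ifs with h
  · exact Or.inr ⟨_, (mem_candidates.mp (Finset.min'_mem _ h.2)).2.2, h.1, rfl⟩
  · exact Or.inl rfl

theorem isReductionStep_stepIJC (B : Matrix (Fin n) (Fin n) (ZMod 2)) (j i : Fin n) :
    IsReductionStep B (stepIJC B j i) j i := by
  unfold stepIJC
  split_ifs with h
  · exact Or.inr ⟨_, (Finset.mem_filter.mp (Finset.min'_mem _ h.2)).2.2, h.1, rfl⟩
  · exact Or.inl rfl

end ReductionSteps

/-- `M` is the matrix reached just before the sweep processes column `c`. -/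
theorem exists_foldl_finRange_split {α : Type*}
    (pass : Fin n → Matrix (Fin n) (Fin n) α → Matrix (Fin n) (Fin n) α)
    (hpass : ∀ j B, ∀ c ≠ j, ∀ r, pass j B r c = B r c) {A R : Matrix (Fin n) (Fin n) α}
    (hR : (List.finRange n).foldl (fun B j => pass j B) A = R) (c : Fin n) :
    ∃ M : Matrix (Fin n) (Fin n) α, (∀ r, M r c = A r c) ∧
      (∀ s < c, ∀ r, R r s = M r s) ∧ ∀ r, R r c = pass c M r c := by
  obtain ⟨l₁, l₂, hl⟩ := List.append_of_mem (List.mem_finRange c)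
  have hsorted := List.pairwise_lt_finRange n
  rw [hl, List.pairwise_append, List.pairwise_cons] at hsorted
  have h₁ : ∀ j ∈ l₁, j < c := fun j hj => hsorted.2.2 j hj c List.mem_cons_self
  have h₂ : ∀ j ∈ l₂, c < j := hsorted.2.1.1
  have hfold {l : List (Fin n)} {s : Fin n} (hs : ∀ j ∈ l, s ≠ j)
      (B : Matrix (Fin n) (Fin n) α) (r : Fin n) : l.foldl (fun B j => pass j B) B r s = B r s :=
    foldl_apply_eq_of_forall_mem (fun j hj C => hpass j C s (hs j hj) r) B
  subst hR
  refine ⟨l₁.foldl (fun B j => pass j B) A, hfold (fun j hj => (h₁ j hj).ne') A, ?_, ?_⟩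
  · intro s hs r
    rw [hl, List.foldl_append, List.foldl_cons,
      hfold (fun j hj => (hs.trans (h₂ j hj)).ne), hpass c _ s hs.ne]
  · intro r
    rw [hl, List.foldl_append, List.foldl_cons, hfold fun j hj => (h₂ j hj).ne]

section ConMat

variable {P : Type*} [DecidableEq P] (morse : Fin n → P)

theorem reduceCol_apply_of_ne (B : Matrix (Fin n) (Fin n) (ZMod 2)) {j c : Fin n} (hc : c ≠ j)
    (r : Fin n) : reduceCol morse B j r c = B r c :=
  foldl_apply_eq_of_forall_mem
    (fun i _ C => (isReductionStep_stepIJ morse C j i).apply_of_ne hc r) B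

theorem candidates_eq_empty_of_stepIJ_ne_zero (B : Matrix (Fin n) (Fin n) (ZMod 2)) {j i : Fin n}
    (h : stepIJ morse B j i i j ≠ 0) : candidates B morse j i = ∅ := by
  unfold stepIJ at h
  split_ifs at h with hstep
  · have hs := (mem_candidates.mp (Finset.min'_mem _ hstep.2)).2.2
    have hsum : ∀ a b : ZMod 2, a ≠ 0 → b ≠ 0 → a + b = 0 := by decide
    simp only [addCol] at h
    exact absurd (hsum _ _ hstep.1 hs.1) h
  · exact Finset.not_nonempty_iff_eq_empty.mp fun hne => hstep ⟨h, hne⟩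

/-- Scanning the rows bottom-up makes the pass exhaustive: a row that is still nonzero at the
end could not be cleared when it was visited, and rows below it are never touched again. -/
theorem candidates_eq_empty_of_foldl_stepIJ (j : Fin n) :
    ∀ l : List (Fin n), l.Pairwise (· > ·) → ∀ B : Matrix (Fin n) (Fin n) (ZMod 2),
      ∀ r ∈ l, l.foldl (fun B i => stepIJ morse B j i) B r j ≠ 0 →
        candidates B morse j r = ∅
  | [], _, _, r, hr => absurd hr List.not_mem_nil
  | i :: t, hl, B, r, hr => by
    rw [List.pairwise_cons] at hl
    rw [List.foldl_cons]
    rcases List.mem_cons.mp hr with rfl | hrt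
    · rw [foldl_apply_eq_of_forall_mem
        fun x hx C => (isReductionStep_stepIJ morse C j x).apply_of_lt (hl.1 x hx)]
      exact candidates_eq_empty_of_stepIJ_ne_zero morse B
    · intro h
      rw [← candidates_eq_empty_of_foldl_stepIJ j t hl.2 _ r hrt h]
      exact candidates_congr fun s hs r' =>
        ((isReductionStep_stepIJ morse B j i).apply_of_ne hs.ne r').symm

theorem homogReduced_conMat (A : Matrix (Fin n) (Fin n) (ZMod 2)) :
    HomogReduced (conMat morse A) morse := by
  intro j r hr
  obtain ⟨M, -, hlt, hj⟩ :=
    exists_foldl_finRange_split (R := conMat morse A) _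
      (fun j B c hc r => reduceCol_apply_of_ne morse B hc r) rfl j
  rw [hj] at hr
  rw [candidates_congr hlt]
  exact candidates_eq_empty_of_foldl_stepIJ morse j _
    (List.pairwise_reverse.mpr (List.pairwise_lt_finRange n)) M r (by simp) hr

theorem lt_of_conMat_ne_zero {A : Matrix (Fin n) (Fin n) (ZMod 2)}
    (hA : ∀ i j, A i j ≠ 0 → i < j) : ∀ i j, conMat morse A i j ≠ 0 → i < j := by
  intro i j h
  obtain ⟨M, hM, -, hj⟩ :=
    exists_foldl_finRange_split (R := conMat morse A) _
      (fun j B c hc r => reduceCol_apply_of_ne morse B hc r) rfl j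
  rw [hj] at h
  exact IsReductionStep.foldl_mem_of_ne_zero (isReductionStep_stepIJ morse · j ·) _
    (isLowerSet_Iio j) (fun r hr => hA r j (hM r ▸ hr)) h

end ConMat

section CompleteReduce

variable {B : Matrix (Fin n) (Fin n) (ZMod 2)}

theorem completeReduce_split (B : Matrix (Fin n) (Fin n) (ZMod 2)) (c : Fin n) :
    ∃ M : Matrix (Fin n) (Fin n) (ZMod 2), (∀ r, M r c = B r c) ∧
      (∀ s < c, ∀ r, completeReduce B r s = M r s) ∧
      ∀ r, completeReduce B r c =
        ((List.finRange n).reverse.foldl (fun C i => stepIJC C c i) M) r c :=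
  exists_foldl_finRange_split _
    (fun j C _ hc r => foldl_apply_eq_of_forall_mem
      (fun i _ D => (isReductionStep_stepIJC D j i).apply_of_ne hc r) C) rfl c

theorem completeReduce_mem_of_ne_zero {c : Fin n} {S : Set (Fin n)} (hS : IsLowerSet S)
    (hB : ∀ r, B r c ≠ 0 → r ∈ S) {r : Fin n} (hr : completeReduce B r c ≠ 0) :
    r ∈ S := by
  obtain ⟨M, hM, -, hc⟩ := completeReduce_split B c
  rw [hc] at hr
  exact IsReductionStep.foldl_mem_of_ne_zero (isReductionStep_stepIJC · c ·) _ hS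
    (fun r hr => hB r (hM r ▸ hr)) hr

/-- A step at a row below `q` sees a zero entry and does nothing, the step at `q` finds no column
to add, and a step at a row above `q` does not reach row `q`. -/
theorem stepIJC_apply_eq_of_not_isLow {C : Matrix (Fin n) (Fin n) (ZMod 2)} {c q : Fin n}
    (hC : ∀ r, C r c ≠ 0 → r ≤ q) (hq : ∀ s < c, ¬ IsLow C s q) (i : Fin n) :
    stepIJC C c i q c = C q c := by
  rcases lt_or_ge q i with hqi | hiq
  · have hic : C i c = 0 := by
      by_contra h
      exact (hC i h).not_gt hqi
    simp [stepIJC, hic]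
  rcases hiq.lt_or_eq with hiq | rfl
  · exact (isReductionStep_stepIJC C c i).apply_of_lt hiq
  · have hempty : candidatesC C c i = ∅ :=
      Finset.eq_empty_of_forall_notMem fun s hs =>
        hq s (Finset.mem_filter.mp hs).2.1 (Finset.mem_filter.mp hs).2.2
    simp [stepIJC, hempty]

theorem isLow_completeReduce {c q : Fin n} (h : IsLow B c q)
    (hq : ∀ s < c, ¬ IsLow (completeReduce B) s q) : IsLow (completeReduce B) c q := by
  obtain ⟨M, hM, hlt, hc⟩ := completeReduce_split B c
  have hsupp (r : Fin n) (hr : completeReduce B r c ≠ 0) : r ≤ q :=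
    completeReduce_mem_of_ne_zero (isLowerSet_Iic q) h.2 hr
  have hpass : ((List.finRange n).reverse.foldl (fun C i => stepIJC C c i) M) q c = M q c := by
    refine (List.foldlRecOn (motive := fun C : Matrix (Fin n) (Fin n) (ZMod 2) =>
        (∀ s < c, ∀ r, C r s = M r s) ∧ (∀ r, C r c ≠ 0 → r ≤ q) ∧ C q c = M q c)
        _ _ ⟨fun _ _ _ => rfl, fun r hr => h.2 r (hM r ▸ hr), rfl⟩ ?_).2.2
    rintro C ⟨hCM, hCc, hCq⟩ i -
    have hstep := isReductionStep_stepIJC C c i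
    refine ⟨fun s hs r => (hstep.apply_of_ne hs.ne r).trans (hCM s hs r),
      fun r => hstep.mem_of_ne_zero (isLowerSet_Iic q) hCc, ?_⟩
    refine (stepIJC_apply_eq_of_not_isLow hCc (fun s hs hlow => hq s hs ?_) i).trans hCq
    rw [isLow_congr (hlt s hs), ← isLow_congr (hCM s hs)]
    exact hlow
  refine ⟨?_, hsupp⟩
  rw [hc, hpass, hM]
  exact h.1

end CompleteReduce

section Homogeneous

variable {P : Type*} [PartialOrder P] [DecidableEq P] {morse : Fin n → P}
  {B : Matrix (Fin n) (Fin n) (ZMod 2)}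

theorem not_isLow_completeReduce (hmono : Monotone morse) (hupper : ∀ i j, B i j ≠ 0 → i < j)
    (hB : HomogReduced B morse) {c q : Fin n} (hqc : B q c ≠ 0) (hq : morse q = morse c)
    (ih : ∀ s < c, ∀ p, IsLow (completeReduce B) s p → morse p = morse s → IsLow B s p) :
    ∀ s < c, ¬ IsLow (completeReduce B) s q := by
  intro s hsc hs
  have hqs : q < s := completeReduce_mem_of_ne_zero (isLowerSet_Iio s) (hupper · s) hs.1
  have hms : morse q = morse s := le_antisymm (hmono hqs.le) ((hmono hsc.le).trans_eq hq.symm)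
  have hlow := ih s hsc q hs hms
  have hmem : s ∈ candidates B morse c q := mem_candidates.mpr ⟨hsc, ⟨q, hlow, hms⟩, hlow⟩
  simp [hB c q hqc] at hmem

theorem isLow_of_isLow_completeReduce (hmono : Monotone morse)
    (hupper : ∀ i j, B i j ≠ 0 → i < j) (hB : HomogReduced B morse) (c : Fin n) :
    ∀ p, IsLow (completeReduce B) c p → morse p = morse c → IsLow B c p := by
  induction c using WellFoundedLT.induction with
  | _ c ih =>
  intro p hp hpc
  obtain ⟨q, hq⟩ : ∃ q, IsLow B c q := by
    refine exists_isLow (not_forall.mp fun hzero => ?_)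
    exact completeReduce_mem_of_ne_zero isLowerSet_empty (fun r hr => hr (hzero r)) hp.1
  have hpq : p ≤ q := completeReduce_mem_of_ne_zero (isLowerSet_Iic q) hq.2 hp.1
  have hqc : q < c := hupper q c hq.1
  have hmq : morse q = morse c := le_antisymm (hmono hqc.le) (hpc ▸ hmono hpq)
  have hlow := isLow_completeReduce hq (not_isLow_completeReduce hmono hupper hB hq.1 hmq ih)
  rwa [hp.unique hlow]

theorem isLow_completeReduce_of_isLow (hmono : Monotone morse)
    (hupper : ∀ i j, B i j ≠ 0 → i < j) (hB : HomogReduced B morse) {c p : Fin n}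
    (h : IsLow B c p) (hp : morse p = morse c) : IsLow (completeReduce B) c p :=
  isLow_completeReduce h <| not_isLow_completeReduce hmono hupper hB h.1 hp
    fun s _ => isLow_of_isLow_completeReduce hmono hupper hB s

theorem homog_completeReduce_iff (hmono : Monotone morse) (hupper : ∀ i j, B i j ≠ 0 → i < j)
    (hB : HomogReduced B morse) (j : Fin n) :
    Homog (completeReduce B) morse j ↔ Homog B morse j :=
  ⟨fun ⟨p, hp, hm⟩ => ⟨p, isLow_of_isLow_completeReduce hmono hupper hB j p hp hm, hm⟩,
    fun ⟨p, hp, hm⟩ => ⟨p, isLow_completeReduce_of_isLow hmono hupper hB hp hm, hm⟩⟩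

end Homogeneous

theorem stmt_12_general {n m : ℕ} (morse : Fin n → Fin m) (hmono : Monotone morse)
    (A : Matrix (Fin n) (Fin n) (ZMod 2))
    (hupper : ∀ i j, A i j ≠ 0 → i < j) (j : Fin n) :
    Homog (conMat morse A) morse j ↔ Homog (completeReduce (conMat morse A)) morse j :=
  (homog_completeReduce_iff hmono (lt_of_conMat_ne_zero morse hupper)
    (homogReduced_conMat morse A) j).symm

/-- Let `A_out = conMat morse A` be the output of the homogeneity-restricted
exhaustive left-to-right column reduction (ConMat) of a strictly upper triangular
boundary matrix `A` (so `A * A = 0`) whose index order is compatible with the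
Morse-set blocks, and let `completeReduce A_out` be a complete (unrestricted)
left-to-right column reduction of `A_out`. Then a column `j` is homogeneous in
`A_out` if and only if it is homogeneous in the complete reduction. -/
theorem stmt_12 {n m : ℕ} (morse : Fin n → Fin m) (hmono : Monotone morse)
    (A : Matrix (Fin n) (Fin n) (ZMod 2))
    (hupper : ∀ i j, A i j ≠ 0 → i < j)
    (hboundary : A * A = 0) (j : Fin n) :
    Homog (conMat morse A) morse j ↔ Homog (completeReduce (conMat morse A)) morse j :=
  stmt_12_general morse hmono A hupper j

end CM
end

section
/- Throughout the execution of ConMat on a P-filtered boundary matrix, every nonzero entry A[l,j] of the current matrix satisfies that the Morse set of simplex σ_l is ≤_P the Morse set of simplex σ_j; moreover, whenever ConMat adds a column k to a column j, the Morse set of σ_k is ≤_P that of σ_j. -/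
namespace CM

/-- One step of ConMat, as a relation: a homogeneous column `s < j` whose pivot
is a row `i` with `A[i,j] = 1` is added to column `j`. -/
def CStep {n : ℕ} {P : Type*} [DecidableEq P] (morse : Fin n → P)
    (A A' : Matrix (Fin n) (Fin n) (ZMod 2)) : Prop :=
  ∃ s j i : Fin n, s < j ∧ Homog A morse s ∧ IsLow A s i ∧ A i j ≠ 0 ∧ A' = addCol A s j

/-- Throughout the execution of ConMat on a `P`-filtered boundary matrix (indices
ordered along a linear extension `lle` of the poset `P` of Morse sets), every
nonzero entry `B[l,j]` of the current matrix satisfies `morse l ≤_P morse j`;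
moreover whenever ConMat adds a column `s` to a column `j`, `morse s ≤_P morse j`. -/
theorem stmt_14 {n : ℕ} {P : Type*} [PartialOrder P] [DecidableEq P]
    (morse : Fin n → P)
    (lle : P → P → Prop) (hlin : IsLinearOrder P lle)
    (hext : ∀ p q : P, p ≤ q → lle p q)
    (hcompat : ∀ i j : Fin n, i ≤ j → lle (morse i) (morse j))
    (A : Matrix (Fin n) (Fin n) (ZMod 2))
    (hupper : ∀ i j, A i j ≠ 0 → i < j)
    (hfilt : ∀ l j, A l j ≠ 0 → morse l ≤ morse j) :
    ∀ B, Relation.ReflTransGen (CStep morse) A B →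
      (∀ l j, B l j ≠ 0 → morse l ≤ morse j) ∧
      (∀ s j i : Fin n, s < j → Homog B morse s → IsLow B s i → B i j ≠ 0 →
        morse s ≤ morse j) := by
  -- pivot uniqueness
  have hpiv : ∀ (B : Matrix (Fin n) (Fin n) (ZMod 2)) (s i i' : Fin n),
      IsLow B s i → IsLow B s i' → i = i' := by
    rintro B s i i' ⟨h1, h2⟩ ⟨h1', h2'⟩
    exact le_antisymm (h2' i h1) (h2 i' h1')
  -- key lemma: from the filtration invariant, any homogeneous addition is monotone
  have hkey : ∀ (B : Matrix (Fin n) (Fin n) (ZMod 2)),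
      (∀ l j, B l j ≠ 0 → morse l ≤ morse j) →
      ∀ s j i : Fin n, Homog B morse s → IsLow B s i → B i j ≠ 0 →
        morse s ≤ morse j := by
    rintro B hB s j i ⟨i', hi', hmi'⟩ hlow hij
    have : i' = i := hpiv B s i' i hi' hlow
    subst this
    exact hmi' ▸ hB i' j hij
  intro B hB
  have hinv : ∀ l j, B l j ≠ 0 → morse l ≤ morse j := by
    induction hB with
    | refl => exact hfilt
    | @tail C C' _ step ih =>
      obtain ⟨s, j, i, hsj, hhom, hlow, hij, rfl⟩ := step
      intro l k hlk
      by_cases hk : k = j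
      · subst hk
        simp only [addCol, if_pos rfl] at hlk
        have hsle : morse s ≤ morse k := hkey C ih s k i hhom hlow hij
        rcases ne_or_eq (C l k) 0 with h | h
        · exact ih l k h
        · have hls : C l s ≠ 0 := by
            intro h0
            apply hlk
            simp [h, h0]
          exact le_trans (ih l s hls) hsle
      · simp only [addCol, if_neg hk] at hlk
        exact ih l k hlk
  exact ⟨hinv, fun s j i _ hhom hlow hij => hkey B hinv s j i hhom hlow hij⟩

end CM
end
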